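/- The translation (·)∘ from the λ̄μμ̃-calculus to the λμ-calculus preserves simple typing: if Γ ⊢ t : A | Δ is derivable in the λ̄μμ̃ type system, then Γ ⊢ t∘ : A | Δ is derivable in the λμ type system (and analogously, λ̄μμ̃-command judgments c : (Γ ⊢ Δ) and λ̄μμ̃-context judgments Γ | e : A ⊢ Δ are mapped to derivable λμ judgments c∘ : (Γ ⊢ Δ) and Γ | e∘ : A ⊢ Δ, possibly with extra fresh μ-variables declared in Δ). -/

import Mathlib

set_option autoImplicit true

namespace CHTyping

/-- Simple types `T ::= X | T → T`. -/
inductive Ty : Type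
  | base : ℕ → Ty
  | arr : Ty → Ty → Ty

/-- Typing environments: finite-domain assignments of simple types to
(named) variables, represented as partial functions. -/
abbrev Cx : Type := ℕ → Option Ty

/-- The empty environment. -/
def emp : Cx := fun _ => none

/-- The one-point environment `x : A`. -/
def single (x : ℕ) (A : Ty) : Cx := fun y => if y = x then some A else none

/-- Union `Γ, Γ'` of two environments (asserted compatible). -/
def union (Γ Γ' : Cx) : Cx := fun x => (Γ x).orElse (fun _ => Γ' x)

/-- Two environments match each other on the intersection of their domains. -/
def Compat (Γ Γ' : Cx) : Prop := ∀ x A B, Γ x = some A → Γ' x = some B → A = B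

/-- `Γ ∖ {x : A}`: removal of a variable from an environment. -/
def remove (Γ : Cx) (x : ℕ) : Cx := fun y => if y = x then none else Γ y

/-- `Γ, x : A`: extension of an environment. -/
def extend (Γ : Cx) (x : ℕ) (A : Ty) : Cx := fun y => if y = x then some A else Γ y

/-! ## The λμ-calculus (named variables) -/

mutual
  /-- λμ-terms `t ::= x | λx.t | t t | μα.c`. -/
  inductive Tm : Type
    | var : ℕ → Tm
    | abs : ℕ → Tm → Tm
    | app : Tm → Tm → Tm
    | mabs : ℕ → Cm → Tm
  /-- λμ-commands `c ::= [α]t`. -/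
  inductive Cm : Type
    | cmd : ℕ → Tm → Cm
end

/-- λμ-contexts `e ::= ⟨α⟩ | ⟨β⟩(t ·) | e · t`. -/
inductive Ct : Type
  | cvar : ℕ → Ct
  | push : ℕ → Tm → Ct
  | cons : Ct → Tm → Ct

/-- Filling a λμ-context with a term: `⟨α⟩⟨t⟩ = [α]t`,
`(⟨β⟩(u ·))⟨t⟩ = [β](u t)`, `(h · u)⟨t⟩ = h⟨t u⟩`. -/
def fill : Ct → Tm → Cm
  | .cvar a, t => .cmd a t
  | .push b u, t => .cmd b (.app u t)
  | .cons h u, t => fill h (.app t u)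

/-! ### The simple type system of λμ.
`TT Γ t A Δ` is the judgment `Γ ⊢ t : A | Δ`, `TC c Γ Δ` is
`c : (Γ ⊢ Δ)` and `TE Γ e A Δ` is `Γ | e : A ⊢ Δ`. -/

mutual
  inductive TT : Cx → Tm → Ty → Cx → Prop
    | var (x : ℕ) (A : Ty) : TT (single x A) (.var x) A emp
    | abs {Γ : Cx} {t : Tm} {B : Ty} {Δ : Cx} {x : ℕ} {A : Ty} :
        TT Γ t B Δ → (Γ x = some A ∨ Γ x = none) →
        TT (remove Γ x) (.abs x t) (.arr A B) Δ
    | app {Γ Γ' : Cx} {u v : Tm} {A B : Ty} {Δ Δ' : Cx} :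
        TT Γ u (.arr A B) Δ → TT Γ' v A Δ' → Compat Γ Γ' → Compat Δ Δ' →
        TT (union Γ Γ') (.app u v) B (union Δ Δ')
    | mabs {c : Cm} {Γ Δ : Cx} {a : ℕ} {A : Ty} :
        TC c Γ Δ → (Δ a = some A ∨ Δ a = none) →
        TT Γ (.mabs a c) A (remove Δ a)
  inductive TC : Cm → Cx → Cx → Prop
    | cmd {Γ : Cx} {t : Tm} {A : Ty} {Δ : Cx} {a : ℕ} :
        TT Γ t A Δ → (Δ a = some A ∨ Δ a = none) →
        TC (.cmd a t) Γ (extend Δ a A)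
end

inductive TE : Cx → Ct → Ty → Cx → Prop
  | cvar (a : ℕ) (A : Ty) : TE emp (.cvar a) A (single a A)
  | push {Γ : Cx} {t : Tm} {A B : Ty} {Δ : Cx} {b : ℕ} :
      TT Γ t (.arr A B) Δ → (Δ b = some B ∨ Δ b = none) →
      TE Γ (.push b t) A (extend Δ b B)
  | cons {Γ Γ' : Cx} {t : Tm} {e : Ct} {A B : Ty} {Δ Δ' : Cx} :
      TT Γ t A Δ → TE Γ' e B Δ' → Compat Γ Γ' → Compat Δ Δ' →
      TE (union Γ Γ') (.cons e t) (.arr A B) (union Δ Δ')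

/-! ## The λ̄μμ̃-calculus (named variables) -/

mutual
  /-- λ̄μμ̃-terms `t ::= x | λx.t | μα.c`. -/
  inductive BTm : Type
    | var : ℕ → BTm
    | abs : ℕ → BTm → BTm
    | mabs : ℕ → BCm → BTm
  /-- λ̄μμ̃-commands `c ::= ⟨t | e⟩`. -/
  inductive BCm : Type
    | cut : BTm → BCt → BCm
  /-- λ̄μμ̃-contexts `e ::= α | t · e | μ̃x.c`. -/
  inductive BCt : Type
    | cvar : ℕ → BCt
    | cons : BTm → BCt → BCt
    | tmu : ℕ → BCm → BCt
end

/-! ### The simple type system of λ̄μμ̃.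
`BT Γ t A Δ` is `Γ ⊢ t : A | Δ`, `BC c Γ Δ` is `c : (Γ ⊢ Δ)` and
`BE Γ e A Δ` is `Γ | e : A ⊢ Δ`. -/

mutual
  inductive BT : Cx → BTm → Ty → Cx → Prop
    | var (x : ℕ) (A : Ty) : BT (single x A) (.var x) A emp
    | abs {Γ : Cx} {t : BTm} {B : Ty} {Δ : Cx} {x : ℕ} {A : Ty} :
        BT Γ t B Δ → (Γ x = some A ∨ Γ x = none) →
        BT (remove Γ x) (.abs x t) (.arr A B) Δ
    | mabs {c : BCm} {Γ Δ : Cx} {a : ℕ} {A : Ty} :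
        BC c Γ Δ → (Δ a = some A ∨ Δ a = none) →
        BT Γ (.mabs a c) A (remove Δ a)
  inductive BC : BCm → Cx → Cx → Prop
    | cut {Γ Γ' : Cx} {t : BTm} {e : BCt} {A : Ty} {Δ Δ' : Cx} :
        BT Γ t A Δ → BE Γ' e A Δ' → Compat Γ Γ' → Compat Δ Δ' →
        BC (.cut t e) (union Γ Γ') (union Δ Δ')
  inductive BE : Cx → BCt → Ty → Cx → Prop
    | cvar (a : ℕ) (A : Ty) : BE emp (.cvar a) A (single a A)
    | cons {Γ Γ' : Cx} {t : BTm} {e : BCt} {A B : Ty} {Δ Δ' : Cx} :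
        BT Γ t A Δ → BE Γ' e B Δ' → Compat Γ Γ' → Compat Δ Δ' →
        BE (union Γ Γ') (.cons t e) (.arr A B) (union Δ Δ')
    | tmu {c : BCm} {Γ Δ : Cx} {x : ℕ} {A : Ty} :
        BC c Γ Δ → (Γ x = some A ∨ Γ x = none) →
        BE (remove Γ x) (.tmu x c) A Δ
end

/-! ### Fresh μ-variable names for the translation `(·)∘` -/

mutual
  /-- A strict upper bound on the μ-variable names occurring in a λμ-term. -/
  def fvMT : Tm → ℕ
    | .var _ => 0
    | .abs _ t => fvMT t
    | .app t u => max (fvMT t) (fvMT u)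
    | .mabs a c => max (a + 1) (fvMC c)
  def fvMC : Cm → ℕ
    | .cmd a t => max (a + 1) (fvMT t)
end

/-! ### The translation `(·)∘` from λ̄μμ̃ to λμ -/

mutual
  /-- `x∘ = x`, `(λx.u)∘ = λx.u∘`, `(μα.c)∘ = μα.c∘`. -/
  def circT : BTm → Tm
    | .var x => .var x
    | .abs x t => .abs x (circT t)
    | .mabs a c => .mabs a (circC c)
  /-- `⟨t | e⟩∘ = e∘⟨t∘⟩`. -/
  def circC : BCm → Cm
    | .cut t e => fill (circE e) (circT t)
  /-- `α∘ = ⟨α⟩`, `(t · h)∘ = h∘ · t∘`,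
  `(μ̃x.c)∘ = ⟨β⟩((λx.μδ.c∘) ·)` with `β, δ` fresh. -/
  def circE : BCt → Ct
    | .cvar a => .cvar a
    | .cons t e => .cons (circE e) (circT t)
    | .tmu x c =>
        let C := circC c
        .push (fvMC C + 1) (.abs x (.mabs (fvMC C) C))
end

/-- `Δ'` extends `Δ` by (possibly) declaring extra variables. -/
def Extends (Δ Δ' : Cx) : Prop := ∀ a A, Δ a = some A → Δ' a = some A

/-! The translation of `μ̃x.c` declares a fresh μ-name `β = fvMC c∘ + 1` of arbitrary type, and
fresh names chosen independently in two subderivations may coincide, so their types could clash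
where the environments are joined. We therefore fix in advance a total type assignment `Θ` that
agrees with `Δ`, and show by mutual induction on derivations that the λμ environment only adds
names below the μ-name bound of the translated term, each `b` with type `Θ b` (`Within`). At a
join, compatibility is then automatic, and the bound keeps `δ` and `β` fresh in the `μ̃` case;
at `μα.c` the assignment is updated at `α`. A cut `⟨t | e⟩` is handled by `TC.fill`: filling a
typed λμ-context with a typed term gives a typed command. -/

theorem union_eq_some {Γ Γ' : Cx} {x : ℕ} {A : Ty} :
    union Γ Γ' x = some A ↔ Γ x = some A ∨ Γ x = none ∧ Γ' x = some A := by
  cases h : Γ x <;> simp [union, h]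

theorem union_emp (Γ : Cx) : union Γ emp = Γ := by
  funext x; cases h : Γ x <;> simp [union, emp, h]

theorem union_assoc (Γ₁ Γ₂ Γ₃ : Cx) : union (union Γ₁ Γ₂) Γ₃ = union Γ₁ (union Γ₂ Γ₃) := by
  funext x; cases h : Γ₁ x <;> simp [union, h]

theorem single_union (x : ℕ) (A : Ty) (Γ : Cx) : union (single x A) Γ = extend Γ x A := by
  funext y; by_cases h : y = x <;> simp [union, single, extend, h]

theorem compat_single_iff {Γ : Cx} {x : ℕ} {A : Ty} :
    Compat Γ (single x A) ↔ Γ x = some A ∨ Γ x = none := by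
  constructor
  · intro h
    cases hx : Γ x with
    | none => exact Or.inr rfl
    | some B => exact Or.inl (congrArg some (h x B A hx (by simp [single])))
  · rintro hx y B C hB hC
    obtain rfl : y = x := by by_contra hy; simp [single, hy] at hC
    simp only [single, if_true, Option.some.injEq] at hC
    rcases hx with hx | hx <;> simp_all

namespace Compat

theorem symm {Γ Γ' : Cx} (h : Compat Γ Γ') : Compat Γ' Γ :=
  fun x A B hA hB => (h x B A hB hA).symm

theorem union_comm {Γ Γ' : Cx} (h : Compat Γ Γ') : union Γ Γ' = union Γ' Γ := by
  funext x
  cases h₁ : Γ x <;> cases h₂ : Γ' x <;> simp [union, h₁, h₂]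
  exact h x _ _ h₁ h₂

theorem union_left {Γ₁ Γ₂ Γ : Cx} (h₁ : Compat Γ₁ Γ) (h₂ : Compat Γ₂ Γ) :
    Compat (union Γ₁ Γ₂) Γ := by
  intro x A B hA hB
  rcases union_eq_some.1 hA with h | ⟨-, h⟩
  exacts [h₁ x A B h hB, h₂ x A B h hB]

theorem of_union_right_left {Γ Γ₁ Γ₂ : Cx} (h : Compat Γ (union Γ₁ Γ₂)) : Compat Γ Γ₁ :=
  fun x A B hA hB => h x A B hA (union_eq_some.2 (Or.inl hB))

theorem of_union_right_right {Γ Γ₁ Γ₂ : Cx} (h : Compat Γ (union Γ₁ Γ₂))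
    (h₁₂ : Compat Γ₁ Γ₂) : Compat Γ Γ₂ := by
  intro x A B hA hB
  cases h₁ : Γ₁ x with
  | none => exact h x A B hA (union_eq_some.2 (Or.inr ⟨h₁, hB⟩))
  | some C => exact (h x A C hA (union_eq_some.2 (Or.inl h₁))).trans (h₁₂ x C B h₁ hB)

end Compat

theorem TC.fill {Γ' : Cx} {e : Ct} {A : Ty} {Δ' : Cx} (he : TE Γ' e A Δ') :
    ∀ {Γ : Cx} {t : Tm} {Δ : Cx}, TT Γ t A Δ → Compat Γ Γ' → Compat Δ Δ' →
      TC (fill e t) (union Γ Γ') (union Δ Δ') := by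
  induction he with
  | cvar a A =>
    intro Γ t Δ ht _ cΔ
    rw [union_emp, cΔ.union_comm, single_union]
    exact TC.cmd ht (compat_single_iff.1 cΔ)
  | @push Γ₀ u A B Δ₀ b hu hb =>
    intro Γ t Δ ht cΓ cΔ
    rw [← single_union] at cΔ ⊢
    have cb : Compat Δ₀ (single b B) := compat_single_iff.2 hb
    have happ := TT.app hu ht cΓ.symm (cΔ.of_union_right_right cb.symm).symm
    have hcmd := TC.cmd happ (compat_single_iff.1 (cb.union_left cΔ.of_union_right_left))
    rwa [cΓ.union_comm, cΔ.union_comm, union_assoc, single_union]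
  | @cons Γ₁ Γ₂ u h A B Δ₁ Δ₂ hu _ cΓ₁₂ cΔ₁₂ ih =>
    intro Γ t Δ ht cΓ cΔ
    have happ := TT.app ht hu cΓ.of_union_right_left cΔ.of_union_right_left
    have hfill := ih happ ((cΓ.of_union_right_right cΓ₁₂).union_left cΓ₁₂)
      ((cΔ.of_union_right_right cΔ₁₂).union_left cΔ₁₂)
    rwa [union_assoc, union_assoc] at hfill

def fvME : Ct → ℕ
  | .cvar a => a + 1
  | .push b t => max (b + 1) (fvMT t)
  | .cons h u => max (fvME h) (fvMT u)

theorem fvMC_fill : ∀ (e : Ct) (t : Tm), fvMC (fill e t) = max (fvME e) (fvMT t)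
  | .cvar _, _ => rfl
  | .push _ _, _ => by simp only [fill, fvMC, fvMT, fvME, max_assoc]
  | .cons h u, t => by simp only [fill, fvMC_fill h, fvME, fvMT]; omega

theorem Extends.trans {Δ₁ Δ₂ Δ₃ : Cx} (h₁₂ : Extends Δ₁ Δ₂) (h₂₃ : Extends Δ₂ Δ₃) :
    Extends Δ₁ Δ₃ :=
  fun a A h => h₂₃ a A (h₁₂ a A h)

theorem Extends.compat {Δ₁ Δ₂ Δ : Cx} (h₁ : Extends Δ₁ Δ) (h₂ : Extends Δ₂ Δ) :
    Compat Δ₁ Δ₂ :=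
  fun a A B hA hB => Option.some.inj ((h₁ a A hA).symm.trans (h₂ a B hB))

theorem union_extends {Δ₁ Δ₂ Δ : Cx} (h₁ : Extends Δ₁ Δ) (h₂ : Extends Δ₂ Δ) :
    Extends (union Δ₁ Δ₂) Δ := by
  intro a A hA
  rcases union_eq_some.1 hA with h | ⟨-, h⟩
  exacts [h₁ a A h, h₂ a A h]

theorem extends_union_left (Δ₁ Δ₂ : Cx) : Extends Δ₁ (union Δ₁ Δ₂) :=
  fun _ _ h => union_eq_some.2 (Or.inl h)

theorem Compat.extends_union_right {Δ₁ Δ₂ : Cx} (h : Compat Δ₁ Δ₂) :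
    Extends Δ₂ (union Δ₁ Δ₂) := by
  rw [h.union_comm]; exact extends_union_left Δ₂ Δ₁

theorem Extends.union_union {Δ₁ Δ₂ Δ₁' Δ₂' : Cx} (h₁ : Extends Δ₁ Δ₁') (h₂ : Extends Δ₂ Δ₂')
    (h : Compat Δ₁' Δ₂') : Extends (union Δ₁ Δ₂) (union Δ₁' Δ₂') :=
  union_extends (h₁.trans (extends_union_left _ _)) (h₂.trans h.extends_union_right)

theorem exists_extends_total (Δ : Cx) : ∃ Θ : ℕ → Ty, Extends Δ (some ∘ Θ) :=
  ⟨fun b => (Δ b).getD (.base 0), fun b B hb => by simp [hb]⟩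

def restrictBelow (Θ : ℕ → Ty) (N : ℕ) : Cx := fun b => if b < N then some (Θ b) else none

theorem restrictBelow_mono (Θ : ℕ → Ty) {N M : ℕ} (h : N ≤ M) :
    Extends (restrictBelow Θ N) (restrictBelow Θ M) := by
  intro b B hb
  simp only [restrictBelow] at hb ⊢
  split_ifs at hb with hbN
  rwa [if_pos (by omega)]

theorem Extends.eq_none_of_restrictBelow {Δ : Cx} {Θ : ℕ → Ty} {N b : ℕ}
    (h : Extends Δ (restrictBelow Θ N)) (hb : N ≤ b) : Δ b = none := by
  cases hΔ : Δ b with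
  | none => rfl
  | some B => simpa [restrictBelow, Nat.not_lt.2 hb] using h b B hΔ

def Within (Θ : ℕ → Ty) (N : ℕ) (Δ Δ' : Cx) : Prop :=
  Extends Δ Δ' ∧ Extends Δ' (restrictBelow Θ N)

namespace Within

variable {Θ : ℕ → Ty} {N M : ℕ} {Δ Δ' : Cx}

theorem mono (h : Within Θ N Δ Δ') (hNM : N ≤ M) : Within Θ M Δ Δ' :=
  ⟨h.1, h.2.trans (restrictBelow_mono Θ hNM)⟩

theorem union {Δ₁ Δ₁' Δ₂ Δ₂' : Cx} (h₁ : Within Θ N Δ₁ Δ₁') (h₂ : Within Θ M Δ₂ Δ₂') :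
    Compat Δ₁' Δ₂' ∧ Within Θ (max N M) (CHTyping.union Δ₁ Δ₂) (CHTyping.union Δ₁' Δ₂') := by
  have h₁' := (h₁.mono (le_max_left N M)).2
  have h₂' := (h₂.mono (le_max_right N M)).2
  exact ⟨h₁'.compat h₂', h₁.1.union_union h₂.1 (h₁'.compat h₂'), union_extends h₁' h₂'⟩

theorem remove {a : ℕ} {A : Ty} (h : Within (Function.update Θ a A) N Δ Δ') :
    Within Θ (max (a + 1) N) (CHTyping.remove Δ a) (CHTyping.remove Δ' a) := by
  refine ⟨fun b B hb => ?_, fun b B hb => ?_⟩ <;> by_cases hba : b = a <;>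
    simp only [CHTyping.remove, hba, if_true, if_false, reduceCtorEq] at hb ⊢
  · exact h.1 b B hb
  · have := h.2 b B hb
    simp only [restrictBelow, Function.update_of_ne hba] at this ⊢
    split_ifs at this with hbN
    rwa [if_pos (by omega)]

theorem extend_fresh (h : Within Θ N Δ Δ') {b : ℕ} (hb : N ≤ b) :
    Within Θ (b + 1) Δ (extend Δ' b (Θ b)) := by
  have hΔ'b := h.2.eq_none_of_restrictBelow hb
  refine ⟨fun a A ha => ?_, fun a A ha => ?_⟩
  · have hab : a ≠ b := by rintro rfl; simp [h.1 a A ha] at hΔ'b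
    simpa [extend, hab] using h.1 a A ha
  · by_cases hab : a = b
    · subst hab; simpa [extend, restrictBelow] using ha
    · simp only [extend, hab, if_false] at ha
      exact h.2.trans (restrictBelow_mono Θ (by omega)) a A ha

end Within

theorem remove_of_eq_none {Δ : Cx} {a : ℕ} (h : Δ a = none) : remove Δ a = Δ := by
  funext b; by_cases hb : b = a <;> simp [remove, hb, h]

theorem Extends.update_of_remove {Δ : Cx} {Θ : ℕ → Ty} {a : ℕ} {A : Ty}
    (h : Extends (remove Δ a) (some ∘ Θ)) (ha : Δ a = some A ∨ Δ a = none) :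
    Extends Δ (some ∘ Function.update Θ a A) := by
  intro b B hb
  by_cases hba : b = a
  · subst hba; rcases ha with ha | ha <;> simp_all
  · simpa [Function.update_of_ne hba] using h b B (by simpa [remove, hba] using hb)

theorem Extends.eq_some_or_eq_none_of_restrictBelow {Δ : Cx} {Θ : ℕ → Ty} {N : ℕ}
    (h : Extends Δ (restrictBelow Θ N)) (b : ℕ) : Δ b = some (Θ b) ∨ Δ b = none := by
  cases hb : Δ b with
  | none => exact Or.inr rfl
  | some B =>
    have := h b B hb
    simp only [restrictBelow] at this
    split_ifs at this
    simp_all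

mutual

theorem BT.circT_within : ∀ {Γ : Cx} {t : BTm} {A : Ty} {Δ : Cx}, BT Γ t A Δ →
    ∀ Θ : ℕ → Ty, Extends Δ (some ∘ Θ) →
      ∃ Δ', Within Θ (fvMT (circT t)) Δ Δ' ∧ TT Γ (circT t) A Δ'
  | _, _, _, _, .var x A => fun _ _ =>
      ⟨emp, ⟨fun _ _ h => h, fun _ _ h => nomatch h⟩, TT.var x A⟩
  | _, _, _, _, .abs ht hx => fun Θ hΘ =>
      let ⟨Δ', hw, ht'⟩ := BT.circT_within ht Θ hΘ
      ⟨Δ', hw, TT.abs ht' hx⟩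
  | _, _, _, _, .mabs (a := a) (A := A) hc ha => fun Θ hΘ => by
      obtain ⟨Δ', hw, hc'⟩ := BC.circC_within hc _ (hΘ.update_of_remove ha)
      refine ⟨remove Δ' a, hw.remove, TT.mabs hc' ?_⟩
      simpa using hw.2.eq_some_or_eq_none_of_restrictBelow a

theorem BC.circC_within : ∀ {c : BCm} {Γ Δ : Cx}, BC c Γ Δ →
    ∀ Θ : ℕ → Ty, Extends Δ (some ∘ Θ) →
      ∃ Δ', Within Θ (fvMC (circC c)) Δ Δ' ∧ TC (circC c) Γ Δ'
  | _, _, _, .cut (t := t) (e := e) ht he cΓ cΔ => fun Θ hΘ => by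
      obtain ⟨Δ₁, hw₁, ht'⟩ := BT.circT_within ht Θ ((extends_union_left _ _).trans hΘ)
      obtain ⟨Δ₂, hw₂, he'⟩ := BE.circE_within he Θ (cΔ.extends_union_right.trans hΘ)
      obtain ⟨cΔ', hw⟩ := hw₁.union hw₂
      refine ⟨union Δ₁ Δ₂, hw.mono ?_, TC.fill he' ht' cΓ cΔ'⟩
      simp only [circC, fvMC_fill]; omega

theorem BE.circE_within : ∀ {Γ : Cx} {e : BCt} {A : Ty} {Δ : Cx}, BE Γ e A Δ →
    ∀ Θ : ℕ → Ty, Extends Δ (some ∘ Θ) →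
      ∃ Δ', Within Θ (fvME (circE e)) Δ Δ' ∧ TE Γ (circE e) A Δ'
  | _, _, _, _, .cvar a A => fun Θ hΘ => by
      refine ⟨single a A, ⟨fun _ _ h => h, fun b B hb => ?_⟩, TE.cvar a A⟩
      obtain ⟨rfl, rfl⟩ : b = a ∧ B = A := by by_cases h : b = a <;> simp_all [single]
      simpa [circE, fvME, restrictBelow] using hΘ b B hb
  | _, _, _, _, .cons (t := t) (e := e) ht he cΓ cΔ => fun Θ hΘ => by
      obtain ⟨Δ₁, hw₁, ht'⟩ := BT.circT_within ht Θ ((extends_union_left _ _).trans hΘ)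
      obtain ⟨Δ₂, hw₂, he'⟩ := BE.circE_within he Θ (cΔ.extends_union_right.trans hΘ)
      obtain ⟨cΔ', hw⟩ := hw₁.union hw₂
      refine ⟨union Δ₁ Δ₂, hw.mono ?_, TE.cons ht' he' cΓ cΔ'⟩
      simp only [circE, fvME]; omega
  | _, _, _, _, .tmu (c := c) hc hx => fun Θ hΘ => by
      obtain ⟨Δ', hw, hc'⟩ := BC.circC_within hc Θ hΘ
      set δ := fvMC (circC c)
      have hδ : Δ' δ = none := hw.2.eq_none_of_restrictBelow le_rfl
      have hμ := TT.mabs (A := Θ (δ + 1)) hc' (Or.inr hδ)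
      rw [remove_of_eq_none hδ] at hμ
      refine ⟨extend Δ' (δ + 1) (Θ (δ + 1)), (hw.extend_fresh (by omega)).mono ?_,
        TE.push (TT.abs hμ hx) (Or.inr (hw.2.eq_none_of_restrictBelow (by omega)))⟩
      simp only [circE, fvME, fvMT]; omega

end

/-- the translation `(·)∘` preserves simple typing: each
derivable λ̄μμ̃ judgment for `t`, `c` or `e` yields a derivable λμ judgment
for `t∘`, `c∘` or `e∘`, possibly with extra fresh μ-variables declared in
`Δ`. -/
theorem circ_type_compatible :
    (∀ (Γ : Cx) (t : BTm) (A : Ty) (Δ : Cx), BT Γ t A Δ →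
      ∃ Δ' : Cx, Extends Δ Δ' ∧ TT Γ (circT t) A Δ') ∧
    (∀ (c : BCm) (Γ Δ : Cx), BC c Γ Δ →
      ∃ Δ' : Cx, Extends Δ Δ' ∧ TC (circC c) Γ Δ') ∧
    (∀ (Γ : Cx) (e : BCt) (A : Ty) (Δ : Cx), BE Γ e A Δ →
      ∃ Δ' : Cx, Extends Δ Δ' ∧ TE Γ (circE e) A Δ') := by
  refine ⟨fun Γ t A Δ h => ?_, fun c Γ Δ h => ?_, fun Γ e A Δ h => ?_⟩ <;>
    obtain ⟨Θ, hΘ⟩ := exists_extends_total Δ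
  · obtain ⟨Δ', hw, ht⟩ := h.circT_within Θ hΘ
    exact ⟨Δ', hw.1, ht⟩
  · obtain ⟨Δ', hw, hc⟩ := h.circC_within Θ hΘ
    exact ⟨Δ', hw.1, hc⟩
  · obtain ⟨Δ', hw, he⟩ := h.circE_within Θ hΘ
    exact ⟨Δ', hw.1, he⟩

end CHTyping
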